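/- arXiv:2203.05085 — 4 statements merged into one kernel-verified Lean document; each statement's English description precedes it below -/
import Mathlib

section
/- With the ToyDown post-processed counts and errors as defined, the root error satisfies E_root = L_root, and for every non-leaf node h and every child h_i of h (1 ≤ i ≤ n(h)), the error satisfies E_{h_i} = L_{h_i} + (1/n(h)) · (E_h − Σ_{j=1}^{n(h)} L_{h_j}). -/
open Finset MeasureTheory ProbabilityTheory

structure Hierarchy where
  Node : Type
  fintypeNode : Fintype Node
  decEqNode : DecidableEq Node
  d : ℕ
  d_pos : 1 ≤ d
  root : Node
  level : Node → ℕ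
  parent : Node → Node
  level_pos : ∀ h, 1 ≤ level h
  level_le : ∀ h, level h ≤ d
  level_root : level root = 1
  root_unique : ∀ h, level h = 1 → h = root
  parent_level : ∀ h, h ≠ root → level (parent h) + 1 = level h
  child_exists : ∀ h, level h < d → ∃ c, c ≠ root ∧ parent c = h

attribute [instance] Hierarchy.fintypeNode Hierarchy.decEqNode

namespace Hierarchy

variable (H : Hierarchy)

def children (h : H.Node) : Finset H.Node :=
  Finset.univ.filter fun c => c ≠ H.root ∧ H.parent c = h

def levelSet (ℓ : ℕ) : Finset H.Node :=
  Finset.univ.filter fun h => H.level h = ℓ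

def leaves : Finset H.Node := H.levelSet H.d

def Consistent (a : H.Node → ℝ) : Prop :=
  ∀ h, H.level h < H.d → a h = ∑ c ∈ H.children h, a c

def IsToyDown (a L α : H.Node → ℝ) : Prop :=
  α H.root = a H.root + L H.root ∧
  ∀ h, H.level h < H.d →
    (∑ c ∈ H.children h, α c) = α h ∧
    ∀ x : H.Node → ℝ, (∑ c ∈ H.children h, x c) = α h →
      (∃ c ∈ H.children h, x c ≠ α c) →
      ∑ c ∈ H.children h, (α c - (a c + L c))^2 <
        ∑ c ∈ H.children h, (x c - (a c + L c))^2

def IsWeights (D : Finset H.Node) (w : H.Node → ℝ) : Prop :=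
  (∀ h, H.level h = H.d → w h = if h ∈ D then 1 else 0) ∧
  (∀ h, H.level h < H.d → w h = (∑ c ∈ H.children h, w c) / ((H.children h).card : ℝ))

def frag (w : H.Node → ℝ) : ℝ :=
  ∑ h ∈ Finset.univ.filter (fun h => h ≠ H.root), (w h - w (H.parent h))^2

end Hierarchy

/-!
Each ToyDown step is a Euclidean projection of the noisy child counts `b` onto the hyperplane
`∑ x = S`, which shifts every coordinate by the same amount `(S - ∑ b) / n`. Subtracting the true
counts and using consistency `a_h = ∑ a_{h_i}` gives the error recursion.
-/

section LeastSquares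

variable {ι : Type*} (s : Finset ι) (b : ι → ℝ) (S : ℝ)

/-- The point of the hyperplane `∑ i ∈ s, x i = S` closest to `b`. -/
noncomputable def sumHyperplaneProj (i : ι) : ℝ :=
  b i + (S - ∑ j ∈ s, b j) / #s

variable {s}

lemma sum_sumHyperplaneProj (hs : s.Nonempty) : ∑ i ∈ s, sumHyperplaneProj s b S i = S := by
  have hcard : (#s : ℝ) ≠ 0 := by exact_mod_cast hs.card_pos.ne'
  simp only [sumHyperplaneProj, sum_add_distrib, sum_const, nsmul_eq_mul]
  field_simp
  ring

lemma sum_sq_sub_eq_sum_sq_sub_sumHyperplaneProj_add (hs : s.Nonempty) {y : ι → ℝ}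
    (hy : ∑ i ∈ s, y i = S) :
    ∑ i ∈ s, (y i - b i) ^ 2 =
      ∑ i ∈ s, (y i - sumHyperplaneProj s b S i) ^ 2 + #s * ((S - ∑ j ∈ s, b j) / #s) ^ 2 := by
  set t := (S - ∑ j ∈ s, b j) / #s
  have hsplit : ∀ i ∈ s, (y i - b i) ^ 2 =
      (y i - sumHyperplaneProj s b S i) ^ 2 + 2 * t * (y i - sumHyperplaneProj s b S i) + t ^ 2 := by
    intro i _
    simp only [sumHyperplaneProj, t]
    ring
  rw [sum_congr rfl hsplit]
  simp only [sum_add_distrib, ← mul_sum, sum_sub_distrib, hy, sum_sumHyperplaneProj b S hs,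
    sum_const, nsmul_eq_mul]
  ring

lemma eq_sumHyperplaneProj_of_isStrictMin {y : ι → ℝ} (hy : ∑ i ∈ s, y i = S)
    (hmin : ∀ x : ι → ℝ, ∑ i ∈ s, x i = S → (∃ i ∈ s, x i ≠ y i) →
      ∑ i ∈ s, (y i - b i) ^ 2 < ∑ i ∈ s, (x i - b i) ^ 2) :
    ∀ i ∈ s, y i = sumHyperplaneProj s b S i := by
  by_contra! hne
  obtain ⟨i, hi, hyi⟩ := hne
  have hs : s.Nonempty := ⟨i, hi⟩
  have hlt := hmin _ (sum_sumHyperplaneProj b S hs) ⟨i, hi, hyi.symm⟩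
  rw [sum_sq_sub_eq_sum_sq_sub_sumHyperplaneProj_add b S hs hy,
    sum_sq_sub_eq_sum_sq_sub_sumHyperplaneProj_add b S hs (sum_sumHyperplaneProj b S hs)] at hlt
  simp only [sub_self, ne_eq, OfNat.ofNat_ne_zero, not_false_eq_true, zero_pow, sum_const_zero,
    zero_add] at hlt
  have hnonneg : 0 ≤ ∑ j ∈ s, (y j - sumHyperplaneProj s b S j) ^ 2 :=
    sum_nonneg fun j _ => sq_nonneg _
  linarith

end LeastSquares

/-- ToyDown error recursion: the root error equals the root noise, and the error at a
child `c` of a non-leaf `h` is `L_c + (1/n(h))·(E_h − Σ_j L_{h_j})`. -/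
theorem toydown_error_recursion (H : Hierarchy) (a L α : H.Node → ℝ)
    (hcons : H.Consistent a) (htd : H.IsToyDown a L α) :
    α H.root - a H.root = L H.root ∧
      ∀ h, H.level h < H.d → ∀ c ∈ H.children h,
        α c - a c =
          L c + (1 / ((H.children h).card : ℝ)) *
            ((α h - a h) - ∑ j ∈ H.children h, L j) := by
  obtain ⟨hroot, hstep⟩ := htd
  refine ⟨by rw [hroot]; ring, fun h hlt c hc => ?_⟩
  obtain ⟨hsum, hmin⟩ := hstep h hlt
  have hproj := eq_sumHyperplaneProj_of_isStrictMin (fun j => a j + L j) (α h) hsum hmin c hc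
  have hnoisy : ∑ j ∈ H.children h, (a j + L j) = a h + ∑ j ∈ H.children h, L j := by
    rw [sum_add_distrib, hcons h hlt]
  have hcard : (#(H.children h) : ℝ) ≠ 0 := by exact_mod_cast card_ne_zero_of_mem hc
  rw [hproj, sumHyperplaneProj, hnoisy]
  field_simp
  ring
end

section
/- Let D ⊆ H_d be a district with associated weights {w_h}. Then the district error satisfies the exact identity E_D = w_root · L_root + Σ_{h ∈ H, h ≠ root} (w_h − w_{ĥ}) · L_h. -/
open Finset MeasureTheory ProbabilityTheory

/-!
Minimality of the least-squares step forces all children `c` of an internal node `h` to carry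
the same residual `α c - (a c + L c)`; the sum constraint identifies it as
`(E h - ∑ L c) / n(h)`. As `w h` is the mean of the children's weights, this gives
`∑ w c * E c = w h * E h + ∑ (w c - w h) * L c` over the children of every internal node.
Telescoping from the root, where `E root = L root`, down to the leaves, where `w` is the
indicator of `D`, yields the identity.
-/

theorem sub_eq_sub_of_sum_sq_sub_le {ι : Type*} [DecidableEq ι] {s : Finset ι} {x b : ι → ℝ}
    (hmin : ∀ y : ι → ℝ, ∑ k ∈ s, y k = ∑ k ∈ s, x k →
      ∑ k ∈ s, (x k - b k) ^ 2 ≤ ∑ k ∈ s, (y k - b k) ^ 2)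
    {i j : ι} (hi : i ∈ s) (hj : j ∈ s) : x i - b i = x j - b j := by
  rcases eq_or_ne i j with rfl | hij
  · rfl
  set t := ((x j - b j) - (x i - b i)) / 2 with ht_def
  set y : ι → ℝ := x + Pi.single i t - Pi.single j t
  have hy_sum : ∑ k ∈ s, y k = ∑ k ∈ s, x k := by
    simp [y, sum_add_distrib, sum_sub_distrib, hi, hj]
  have hgain : ∑ k ∈ s, ((y k - b k) ^ 2 - (x k - b k) ^ 2) = -(2 * t ^ 2) := by
    rw [← sum_subset (s₁ := {i, j}) (by simp [insert_subset_iff, hi, hj])]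
    · rw [sum_pair hij]
      simp only [y, Pi.add_apply, Pi.sub_apply, Pi.single_eq_same, Pi.single_eq_of_ne hij,
        Pi.single_eq_of_ne hij.symm]
      ring
    · intro k _ hk
      simp only [mem_insert, mem_singleton, not_or] at hk
      simp [y, Pi.single_eq_of_ne hk.1, Pi.single_eq_of_ne hk.2]
  rw [sum_sub_distrib] at hgain
  have ht : t = 0 := by nlinarith [hmin y hy_sum]
  linarith [ht_def]

theorem sub_eq_div_card_of_sum_sq_sub_le {ι : Type*} [DecidableEq ι] {s : Finset ι}
    {x b : ι → ℝ}
    (hmin : ∀ y : ι → ℝ, ∑ k ∈ s, y k = ∑ k ∈ s, x k →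
      ∑ k ∈ s, (x k - b k) ^ 2 ≤ ∑ k ∈ s, (y k - b k) ^ 2)
    {i : ι} (hi : i ∈ s) : x i - b i = (∑ k ∈ s, x k - ∑ k ∈ s, b k) / #s := by
  have hcard : (#s : ℝ) ≠ 0 := by exact_mod_cast (card_pos.2 ⟨i, hi⟩).ne'
  rw [eq_div_iff hcard, ← sum_sub_distrib,
    sum_congr rfl fun k hk => sub_eq_sub_of_sum_sq_sub_le hmin hk hi,
    sum_const, nsmul_eq_mul, mul_comm]

namespace Hierarchy

variable {H : Hierarchy}

theorem mem_children {c h : H.Node} : c ∈ H.children h ↔ c ≠ H.root ∧ H.parent c = h := by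
  simp [children]

theorem mem_levelSet {h : H.Node} {ℓ : ℕ} : h ∈ H.levelSet ℓ ↔ H.level h = ℓ := by
  simp [levelSet]

theorem level_eq_one_iff {h : H.Node} : H.level h = 1 ↔ h = H.root :=
  ⟨H.root_unique h, fun hh => hh ▸ H.level_root⟩

theorem children_nonempty {h : H.Node} (hh : H.level h < H.d) : (H.children h).Nonempty := by
  obtain ⟨c, hc⟩ := H.child_exists h hh
  exact ⟨c, mem_children.2 hc⟩

theorem levelSet_one : H.levelSet 1 = {H.root} := by
  ext h
  rw [mem_levelSet, level_eq_one_iff, mem_singleton]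

theorem children_eq_filter_levelSet {p : H.Node} {ℓ : ℕ} (hp : H.level p = ℓ) :
    H.children p = (H.levelSet (ℓ + 1)).filter (fun c => H.parent c = p) := by
  ext c
  simp only [mem_children, mem_filter, mem_levelSet]
  constructor
  · rintro ⟨hc, rfl⟩
    exact ⟨by rw [← H.parent_level c hc, hp], rfl⟩
  · rintro ⟨hc, rfl⟩
    refine ⟨fun hroot => ?_, rfl⟩
    rw [hroot, H.level_root] at hc
    have := H.level_pos (H.parent c)
    omega

theorem sum_levelSet_succ {M : Type*} [AddCommMonoid M] (f : H.Node → M) {ℓ : ℕ}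
    (hℓ : 1 ≤ ℓ) :
    ∑ c ∈ H.levelSet (ℓ + 1), f c = ∑ p ∈ H.levelSet ℓ, ∑ c ∈ H.children p, f c := by
  have hparent : ∀ c ∈ H.levelSet (ℓ + 1), H.parent c ∈ H.levelSet ℓ := by
    intro c hc
    rw [mem_levelSet] at hc ⊢
    have hc_root : c ≠ H.root := fun hroot => by
      rw [hroot, H.level_root] at hc
      omega
    have := H.parent_level c hc_root
    omega
  rw [← sum_fiberwise_of_maps_to hparent]
  exact sum_congr rfl fun p hp => by rw [children_eq_filter_levelSet (mem_levelSet.1 hp)]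

theorem filter_ne_root_level_le_one :
    univ.filter (fun h => h ≠ H.root ∧ H.level h ≤ 1) = ∅ := by
  ext h
  simp only [mem_filter, mem_univ, true_and, notMem_empty, iff_false, not_and]
  intro hh hle
  exact hh (level_eq_one_iff.1 (le_antisymm hle (H.level_pos h)))

theorem filter_ne_root_level_le_succ {ℓ : ℕ} (hℓ : 1 ≤ ℓ) :
    univ.filter (fun h => h ≠ H.root ∧ H.level h ≤ ℓ + 1) =
      univ.filter (fun h => h ≠ H.root ∧ H.level h ≤ ℓ) ∪ H.levelSet (ℓ + 1) := by
  ext h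
  simp only [mem_filter, mem_univ, true_and, mem_union, mem_levelSet]
  by_cases hroot : h = H.root
  · simp only [hroot, H.level_root, ne_eq, not_true_eq_false, false_and, false_or, false_iff]
    omega
  · simp only [hroot, ne_eq, not_false_eq_true, true_and]
    omega

theorem sum_levelSet_eq_add_sum_of_sum_children {M : Type*} [AddCommMonoid M]
    (F : H.Node → M) (G : H.Node → H.Node → M)
    (hFG : ∀ p, H.level p < H.d →
      ∑ c ∈ H.children p, F c = F p + ∑ c ∈ H.children p, G p c)
    {ℓ : ℕ} (h1 : 1 ≤ ℓ) (hℓ : ℓ ≤ H.d) :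
    ∑ h ∈ H.levelSet ℓ, F h =
      F H.root + ∑ h ∈ univ.filter (fun h => h ≠ H.root ∧ H.level h ≤ ℓ), G (H.parent h) h := by
  induction ℓ, h1 using Nat.le_induction with
  | base => rw [levelSet_one, filter_ne_root_level_le_one, sum_singleton, sum_empty, add_zero]
  | succ ℓ h1 ih =>
    have hdisj : Disjoint (univ.filter (fun h => h ≠ H.root ∧ H.level h ≤ ℓ))
        (H.levelSet (ℓ + 1)) := by
      rw [disjoint_left]
      intro h hh hh'
      rw [mem_filter] at hh
      rw [mem_levelSet] at hh'
      omega
    calc ∑ h ∈ H.levelSet (ℓ + 1), F h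
        = ∑ p ∈ H.levelSet ℓ, ∑ c ∈ H.children p, F c := sum_levelSet_succ F h1
      _ = ∑ p ∈ H.levelSet ℓ, (F p + ∑ c ∈ H.children p, G (H.parent c) c) := by
          refine sum_congr rfl fun p hp => ?_
          rw [hFG p (by rw [mem_levelSet.1 hp]; omega)]
          exact congrArg _ (sum_congr rfl fun c hc => by rw [(mem_children.1 hc).2])
      _ = ∑ p ∈ H.levelSet ℓ, F p + ∑ c ∈ H.levelSet (ℓ + 1), G (H.parent c) c := by
          rw [sum_add_distrib, sum_levelSet_succ _ h1]
      _ = _ := by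
          rw [ih (by omega), filter_ne_root_level_le_succ h1, sum_union hdisj, add_assoc]

theorem sum_leaves_eq_add_sum_of_sum_children {M : Type*} [AddCommMonoid M]
    (F : H.Node → M) (G : H.Node → H.Node → M)
    (hFG : ∀ p, H.level p < H.d →
      ∑ c ∈ H.children p, F c = F p + ∑ c ∈ H.children p, G p c) :
    ∑ h ∈ H.leaves, F h = F H.root + ∑ h ∈ univ.filter (· ≠ H.root), G (H.parent h) h := by
  rw [leaves, sum_levelSet_eq_add_sum_of_sum_children F G hFG H.d_pos le_rfl]
  congr 2
  exact filter_congr fun h _ => and_iff_left (H.level_le h)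

theorem IsToyDown.sum_sq_le {a L α : H.Node → ℝ} (htd : H.IsToyDown a L α) {h : H.Node}
    (hh : H.level h < H.d) (y : H.Node → ℝ)
    (hy : ∑ c ∈ H.children h, y c = ∑ c ∈ H.children h, α c) :
    ∑ c ∈ H.children h, (α c - (a c + L c)) ^ 2 ≤ ∑ c ∈ H.children h, (y c - (a c + L c)) ^ 2 := by
  obtain ⟨hsum, hmin⟩ := htd.2 h hh
  by_cases hdiff : ∃ c ∈ H.children h, y c ≠ α c
  · exact (hmin y (hy.trans hsum) hdiff).le
  · push Not at hdiff
    exact (sum_congr rfl fun c hc => by rw [hdiff c hc]).ge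

theorem IsToyDown.sub_eq_of_mem_children {a L α : H.Node → ℝ} (hcons : H.Consistent a)
    (htd : H.IsToyDown a L α) {h c : H.Node} (hh : H.level h < H.d) (hc : c ∈ H.children h) :
    α c - a c = L c + (α h - a h - ∑ c' ∈ H.children h, L c') / #(H.children h) := by
  have := sub_eq_div_card_of_sum_sq_sub_le (b := fun c => a c + L c) (htd.sum_sq_le hh) hc
  rw [(htd.2 h hh).1, sum_add_distrib, ← hcons h hh] at this
  rw [sub_sub]
  linarith

theorem IsToyDown.sum_children_mul_sub {a L α w : H.Node → ℝ} (hcons : H.Consistent a)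
    (htd : H.IsToyDown a L α) {p : H.Node} (hp : H.level p < H.d)
    (hwp : w p = (∑ c ∈ H.children p, w c) / #(H.children p)) :
    ∑ c ∈ H.children p, w c * (α c - a c) =
      w p * (α p - a p) + ∑ c ∈ H.children p, (w c - w p) * L c := by
  set n : ℝ := (#(H.children p) : ℝ)
  set K := (α p - a p - ∑ c ∈ H.children p, L c) / n
  have hn : n ≠ 0 := Nat.cast_ne_zero.2 (card_pos.2 (children_nonempty hp)).ne'
  have hw_sum : ∑ c ∈ H.children p, w c = n * w p := by rw [hwp, mul_div_cancel₀ _ hn]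
  calc ∑ c ∈ H.children p, w c * (α c - a c)
      = ∑ c ∈ H.children p, (w c * L c + w c * K) :=
        sum_congr rfl fun c hc => by rw [htd.sub_eq_of_mem_children hcons hp hc, mul_add]
    _ = w p * (n * K) + ∑ c ∈ H.children p, w c * L c := by
        rw [sum_add_distrib, ← sum_mul, hw_sum]
        ring
    _ = w p * (α p - a p - ∑ c ∈ H.children p, L c) + ∑ c ∈ H.children p, w c * L c := by
        rw [mul_div_cancel₀ _ hn]
    _ = _ := by
        simp only [sub_mul, sum_sub_distrib, ← mul_sum]
        ring

end Hierarchy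

/-- District error identity: `E_D = w_root·L_root + Σ_{h ≠ root} (w_h − w_{parent h})·L_h`. -/
theorem toydown_district_error (H : Hierarchy) (a L α : H.Node → ℝ)
    (hcons : H.Consistent a) (htd : H.IsToyDown a L α)
    (D : Finset H.Node) (hD : D ⊆ H.leaves)
    (w : H.Node → ℝ) (hw : H.IsWeights D w) :
    ∑ h ∈ D, (α h - a h) =
      w H.root * L H.root +
        ∑ h ∈ Finset.univ.filter (fun h => h ≠ H.root),
          (w h - w (H.parent h)) * L h := by
  have hleaf : ∀ h ∈ H.leaves, w h = if h ∈ D then 1 else 0 :=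
    fun h hh => hw.1 h (Hierarchy.mem_levelSet.1 hh)
  calc ∑ h ∈ D, (α h - a h)
      = ∑ h ∈ D, w h * (α h - a h) :=
        sum_congr rfl fun h hh => by rw [hleaf h (hD hh), if_pos hh, one_mul]
    _ = ∑ h ∈ H.leaves, w h * (α h - a h) :=
        sum_subset hD fun h hh hhD => by rw [hleaf h hh, if_neg hhD, zero_mul]
    _ = w H.root * (α H.root - a H.root) +
          ∑ h ∈ univ.filter (· ≠ H.root), (w h - w (H.parent h)) * L h :=
        H.sum_leaves_eq_add_sum_of_sum_children _ (fun p c => (w c - w p) * L c)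
          fun p hp => htd.sum_children_mul_sub hcons hp (hw.2 p hp)
    _ = _ := by rw [htd.1, add_sub_cancel_left]
end

section
/- Let d ≥ 1, let a_1, …, a_d > 0 and ε > 0. Then the minimum value of f(x_1, …, x_d) = Σ_{ℓ=1}^{d} a_ℓ / x_ℓ² over the set {x ∈ ℝ^d : x_ℓ > 0 for all ℓ and Σ_ℓ x_ℓ = ε} equals (Σ_{i=1}^{d} a_i^{1/3})³ / ε². -/
/-!
Write `aᵢ = bᵢ³` and `S = Σ bᵢ`. For fixed `t ≥ 0`, AM-GM applied to `b³/x²`, `t³x`, `t³x` gives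
`b³/x² ≥ 3t²b - 2t³x`; summing with `t = S/ε` over an allocation with `Σ xᵢ = ε` bounds the
objective below by `3S³/ε² - 2S³/ε² = S³/ε²`. Equality holds when every `bᵢ = t xᵢ`, that is,
for the allocation `xᵢ = ε bᵢ / S`.
-/

open Finset

lemma sq_mul_sub_le_pow_three_div_sq {b x t : ℝ} (hb : 0 ≤ b) (hx : 0 < x) (ht : 0 ≤ t) :
    3 * t ^ 2 * b - 2 * t ^ 3 * x ≤ b ^ 3 / x ^ 2 := by
  rw [le_div_iff₀ (by positivity)]
  -- the gap, times `x²`, factors as `(b - t x)² (b + 2 t x)`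
  linear_combination mul_nonneg (sq_nonneg (b - t * x)) (by positivity : 0 ≤ b + 2 * t * x)

section Allocation

variable {ι : Type*} [Fintype ι] {b y : ι → ℝ} {ε : ℝ}

theorem pow_three_sum_div_sq_le_sum_pow_three_div_sq (hb : ∀ i, 0 ≤ b i) (hy : ∀ i, 0 < y i)
    (hε : 0 < ε) (hsum : ∑ i, y i = ε) :
    (∑ i, b i) ^ 3 / ε ^ 2 ≤ ∑ i, b i ^ 3 / y i ^ 2 := by
  set S := ∑ i, b i
  have ht : 0 ≤ S / ε := div_nonneg (sum_nonneg fun i _ => hb i) hε.le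
  calc S ^ 3 / ε ^ 2
      = ∑ i, (3 * (S / ε) ^ 2 * b i - 2 * (S / ε) ^ 3 * y i) := by
        rw [sum_sub_distrib, ← mul_sum, ← mul_sum, hsum]
        field_simp
        ring
    _ ≤ ∑ i, b i ^ 3 / y i ^ 2 :=
        sum_le_sum fun i _ => sq_mul_sub_le_pow_three_div_sq (hb i) (hy i) ht

theorem sum_pow_three_div_sq_of_proportional (hb : ∀ i, 0 < b i) (hε : 0 < ε) (hS : 0 < ∑ i, b i) :
    ∑ i, b i ^ 3 / (ε * b i / ∑ j, b j) ^ 2 = (∑ i, b i) ^ 3 / ε ^ 2 := by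
  set S := ∑ i, b i
  have hterm : ∀ i, b i ^ 3 / (ε * b i / S) ^ 2 = S ^ 2 / ε ^ 2 * b i := fun i => by
    have := hb i
    field_simp
  rw [sum_congr rfl fun i _ => hterm i, ← mul_sum]
  ring

end Allocation

/-- The minimum value of `f(x) = Σ_ℓ a_ℓ / x_ℓ²` over
`{x : ∀ ℓ, x_ℓ > 0, Σ_ℓ x_ℓ = ε}` equals `(Σᵢ aᵢ^{1/3})³ / ε²`. -/
theorem budget_allocation_min_value
    (d : ℕ) (hd : 1 ≤ d) (a : Fin d → ℝ) (ha : ∀ i, 0 < a i)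
    (ε : ℝ) (hε : 0 < ε) :
    IsLeast
      {v : ℝ | ∃ y : Fin d → ℝ, (∀ i, 0 < y i) ∧ (∑ i, y i = ε) ∧
        v = ∑ i, a i / (y i) ^ 2}
      ((∑ i, (a i) ^ ((1 : ℝ) / 3)) ^ 3 / ε ^ 2) := by
  set b : Fin d → ℝ := fun i => a i ^ ((1 : ℝ) / 3)
  have hb : ∀ i, 0 < b i := fun i => Real.rpow_pos_of_pos (ha i) _
  have hb3 : ∀ i, a i = b i ^ 3 := fun i => by
    rw [← Real.rpow_natCast, ← Real.rpow_mul (ha i).le]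
    norm_num
  simp only [hb3]
  have hS : 0 < ∑ i, b i := sum_pos (fun i _ => hb i) ⟨⟨0, hd⟩, mem_univ _⟩
  refine ⟨⟨fun i => ε * b i / ∑ j, b j, fun i => by have := hb i; positivity, ?_,
    (sum_pow_three_div_sq_of_proportional hb hε hS).symm⟩, ?_⟩
  · rw [← sum_div, ← mul_sum]
    field_simp
  · rintro v ⟨y, hy, hsum, rfl⟩
    exact pow_three_sum_div_sq_le_sum_pow_three_div_sq (fun i => (hb i).le) hy hε hsum
end

section
/- Let T be a finite nonempty set of types. For each type t ∈ T, let {a_{h,t}}_{h∈H} be hierarchically consistent raw counts and {L_{h,t}}_{h∈H} ⊆ ℝ noise values, and set â_{h,t} = a_{h,t} + L_{h,t}. Define the multi-attribute post-processed counts {α_{h,t}} top-down by: α_{root,t} = â_{root,t} for each t, and for each non-leaf h, the array (x_{i,t})_{1≤i≤n(h), t∈T} minimizing Σ_{i,t} (x_{i,t} − â_{h_i,t})² subject to Σ_{i=1}^{n(h)} x_{i,t} = α_{h,t} for every t ∈ T, which is unique. Then for each fixed t ∈ T, the counts {α_{h,t}}_{h∈H} coincide exactly with the output of single-attribute ToyDown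 post-processing applied to the raw counts {a_{h,t}}_{h∈H} and noise values {L_{h,t}}_{h∈H}; that is, multi-attribute ToyDown without a non-negativity constraint is equivalent to |T| independent instances of single-attribute ToyDown, one per type. -/
open Finset MeasureTheory ProbabilityTheory

/-- Multi-attribute ToyDown post-processing (without non-negativity): at the root the
noised counts are kept, and below each non-leaf node the array of children counts is the
unique least-squares point consistent with the parent totals for every type. -/
def Hierarchy.IsMultiToyDown (H : Hierarchy) (T : Type) [Fintype T]
    (a L α : H.Node → T → ℝ) : Prop :=
  (∀ t, α H.root t = a H.root t + L H.root t) ∧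
  ∀ h, H.level h < H.d →
    (∀ t, (∑ c ∈ H.children h, α c t) = α h t) ∧
    ∀ x : H.Node → T → ℝ, (∀ t, (∑ c ∈ H.children h, x c t) = α h t) →
      (∃ c ∈ H.children h, ∃ t, x c t ≠ α c t) →
      ∑ c ∈ H.children h, ∑ t, (α c t - (a c t + L c t)) ^ 2 <
        ∑ c ∈ H.children h, ∑ t, (x c t - (a c t + L c t)) ^ 2

/-!
The multi-attribute objective is the sum over types of the single-attribute objectives and
the constraints bind each type separately, so replacing one type's column of the
multi-attribute optimum by any competitor keeps it feasible and changes only that type's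
summand: each column is a strict single-attribute optimum. Strict optima are unique, so a
top-down induction over the levels identifies every single-attribute ToyDown output with
the corresponding column.
-/

section LeastSquaresSplit

variable {ι T : Type*}

def IsLeastSquaresSplit (s : Finset ι) (b : ι → ℝ) (m : ℝ) (y : ι → ℝ) : Prop :=
  ∑ c ∈ s, y c = m ∧
    ∀ x : ι → ℝ, ∑ c ∈ s, x c = m → (∃ c ∈ s, x c ≠ y c) →
      ∑ c ∈ s, (y c - b c) ^ 2 < ∑ c ∈ s, (x c - b c) ^ 2

def IsMultiLeastSquaresSplit [Fintype T] (s : Finset ι) (b : ι → T → ℝ) (m : T → ℝ)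
    (y : ι → T → ℝ) : Prop :=
  (∀ t, ∑ c ∈ s, y c t = m t) ∧
    ∀ x : ι → T → ℝ, (∀ t, ∑ c ∈ s, x c t = m t) → (∃ c ∈ s, ∃ t, x c t ≠ y c t) →
      ∑ c ∈ s, ∑ t, (y c t - b c t) ^ 2 < ∑ c ∈ s, ∑ t, (x c t - b c t) ^ 2

theorem IsLeastSquaresSplit.eqOn {s : Finset ι} {b : ι → ℝ} {m : ℝ} {y z : ι → ℝ}
    (hy : IsLeastSquaresSplit s b m y) (hz : IsLeastSquaresSplit s b m z) :
    Set.EqOn y z s := by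
  intro c hc
  by_contra hne
  have hyz := hy.2 z hz.1 ⟨c, hc, Ne.symm hne⟩
  have hzy := hz.2 y hy.1 ⟨c, hc, hne⟩
  exact lt_asymm hyz hzy

theorem sum_sq_sub_update [Fintype T] [DecidableEq T] (f b : T → ℝ) (t : T) (v : ℝ) :
    ∑ s, (Function.update f t v s - b s) ^ 2 =
      ∑ s, (f s - b s) ^ 2 + ((v - b t) ^ 2 - (f t - b t) ^ 2) := by
  rw [← add_sum_erase _ _ (mem_univ t), ← add_sum_erase _ _ (mem_univ t),
    sum_congr rfl fun s hs => by rw [Function.update_of_ne (ne_of_mem_erase hs)]]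
  simp only [Function.update_self]
  ring

theorem IsMultiLeastSquaresSplit.apply [Fintype T] {s : Finset ι} {b : ι → T → ℝ}
    {m : T → ℝ} {y : ι → T → ℝ} (hy : IsMultiLeastSquaresSplit s b m y) (t : T) :
    IsLeastSquaresSplit s (b · t) (m t) (y · t) := by
  classical
  refine ⟨hy.1 t, fun x hx ⟨c, hc, hne⟩ => ?_⟩
  have hsums : ∀ t', ∑ c ∈ s, Function.update (y c) t (x c) t' = m t' := by
    intro t'
    rcases eq_or_ne t' t with rfl | ht
    · simpa using hx
    · simpa [Function.update_of_ne ht] using hy.1 t'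
  have hlt := hy.2 _ hsums ⟨c, hc, t, by simpa using hne⟩
  simp only [sum_sq_sub_update, sum_add_distrib, sum_sub_distrib] at hlt
  linarith

end LeastSquaresSplit

namespace Hierarchy

variable {H : Hierarchy}

theorem mem_children_parent {h : H.Node} (hr : h ≠ H.root) : h ∈ H.children (H.parent h) := by
  simp [children, hr]

theorem level_parent_lt_d {h : H.Node} (hr : h ≠ H.root) : H.level (H.parent h) < H.d := by
  have := H.parent_level h hr
  have := H.level_le h
  omega

theorem ext_of_root_of_children {f g : H.Node → ℝ} (hroot : f H.root = g H.root)
    (hchildren : ∀ h, H.level h < H.d → f h = g h → Set.EqOn f g (H.children h)) :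
    f = g := by
  suffices ∀ n h, H.level h ≤ n → f h = g h from funext fun h => this _ h le_rfl
  intro n
  induction n with
  | zero => intro h hh; exact absurd (H.level_pos h) (by omega)
  | succ n ih =>
    intro h hh
    by_cases hr : h = H.root
    · exact hr ▸ hroot
    · have hp := H.parent_level h hr
      exact hchildren _ (level_parent_lt_d hr) (ih _ (by omega)) (mem_children_parent hr)

theorem IsToyDown.unique {a L α β : H.Node → ℝ} (hα : H.IsToyDown a L α)
    (hβ : H.IsToyDown a L β) : α = β :=
  ext_of_root_of_children (hα.1.trans hβ.1.symm) fun h hh hαβ => by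
    have hβ' : IsLeastSquaresSplit (H.children h) (fun c => a c + L c) (α h) β :=
      hαβ ▸ hβ.2 h hh
    exact IsLeastSquaresSplit.eqOn (hα.2 h hh) hβ'

theorem IsMultiToyDown.isToyDown_apply {T : Type} [Fintype T] {a L α : H.Node → T → ℝ}
    (hα : H.IsMultiToyDown T a L α) (t : T) :
    H.IsToyDown (a · t) (L · t) (α · t) :=
  ⟨hα.1 t, fun h hh =>
    IsMultiLeastSquaresSplit.apply (b := fun c t => a c t + L c t) (hα.2 h hh) t⟩

end Hierarchy

theorem multi_toydown_eq_single_general (H : Hierarchy)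
    (T : Type) [Fintype T]
    (a L α : H.Node → T → ℝ)
    (hmulti : H.IsMultiToyDown T a L α) :
    ∀ t, H.IsToyDown (fun h => a h t) (fun h => L h t) (fun h => α h t) ∧
      ∀ αs : H.Node → ℝ,
        H.IsToyDown (fun h => a h t) (fun h => L h t) αs →
          αs = fun h => α h t := by
  intro t
  have hα := hmulti.isToyDown_apply t
  exact ⟨hα, fun αs hαs => hαs.unique hα⟩

/-- Multi-attribute ToyDown without a non-negativity constraint decomposes into `|T|`
independent instances of single-attribute ToyDown: for each type `t`, the multi-attribute
output restricted to `t` satisfies the single-attribute ToyDown characterization, and it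
is the unique such function. -/
theorem multi_toydown_eq_single (H : Hierarchy)
    (T : Type) [Fintype T] [Nonempty T]
    (a L α : H.Node → T → ℝ)
    (hcons : ∀ t, H.Consistent (fun h => a h t))
    (hmulti : H.IsMultiToyDown T a L α) :
    ∀ t, H.IsToyDown (fun h => a h t) (fun h => L h t) (fun h => α h t) ∧
      ∀ αs : H.Node → ℝ,
        H.IsToyDown (fun h => a h t) (fun h => L h t) αs →
          αs = fun h => α h t :=
  multi_toydown_eq_single_general H T a L α hmulti
end
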